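/- Suppose f, g ∈ PW_γ satisfy |f(x)| = |g(x)| and |f′(x)| = |g′(x)| for all x ∈ ℝ. Then there is λ ∈ ℂ with |λ| = 1 such that f = λg or f = λg^♯. -/

import Mathlib

noncomputable section
open MeasureTheory Complex Filter Topology

/-- `f` has exponential type at most `γ`. -/
def ExpType (γ : ℝ) (f : ℂ → ℂ) : Prop :=
  ∀ ε > 0, ∃ C > 0, ∀ z : ℂ, ‖f z‖ ≤ C * Real.exp ((γ + ε) * ‖z‖)

/-- The Paley-Wiener space `PW_γ`: entire functions of exponential type at most `γ`
whose restriction to the real line is square integrable. -/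
def IsPW (γ : ℝ) (f : ℂ → ℂ) : Prop :=
  Differentiable ℂ f ∧ ExpType γ f ∧ Integrable (fun x : ℝ => ‖f x‖ ^ 2)

/-- `f^♯(z) = conj (f (conj z))`. -/
def sharp (f : ℂ → ℂ) : ℂ → ℂ := fun z => (starRingEnd ℂ) (f ((starRingEnd ℂ) z))

/-- The (lower) Beurling density of `X` is strictly greater than `c`. -/
def hasDensityGT (X : Set ℝ) (c : ℝ) : Prop :=
  ∃ d : ℝ, c < d ∧ ∃ H : ℝ, ∀ h ≥ H, ∀ x : ℝ, d * h ≤ ((X ∩ Set.Icc x (x + h)).ncard : ℝ)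

/-- `t` is a set of sampling for `PW_γ`: frame inequalities hold. -/
def IsSamplingSet (γ : ℝ) (t : ℤ → ℝ) : Prop :=
  ∃ A B : ℝ, 0 < A ∧ 0 < B ∧ ∀ f : ℂ → ℂ, IsPW γ f →
    (A * ∫ x : ℝ, ‖f x‖ ^ 2 ≤ ∑' n : ℤ, ‖f (t n)‖ ^ 2) ∧
    (∑' n : ℤ, ‖f (t n)‖ ^ 2 ≤ B * ∫ x : ℝ, ‖f x‖ ^ 2)

lemma tendsto_conj_punctured (w : ℂ) :
    Tendsto (starRingEnd ℂ) (𝓝[≠] w) (𝓝[≠] ((starRingEnd ℂ) w)) := by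
  refine tendsto_nhdsWithin_of_tendsto_nhds_of_eventually_within _
    ((Complex.continuous_conj.tendsto w).mono_left nhdsWithin_le_nhds) ?_
  filter_upwards [self_mem_nhdsWithin] with z hz
  simp only [Set.mem_compl_iff, Set.mem_singleton_iff] at hz ⊢
  exact fun h => hz (star_injective h)

lemma sharp_hasDerivAt {f : ℂ → ℂ} {c : ℂ} {w : ℂ}
    (h : HasDerivAt f c ((starRingEnd ℂ) w)) :
    HasDerivAt (sharp f) ((starRingEnd ℂ) c) w := by
  rw [hasDerivAt_iff_tendsto_slope] at h ⊢
  have key : ∀ z, slope (sharp f) w z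
      = (starRingEnd ℂ) (slope f ((starRingEnd ℂ) w) ((starRingEnd ℂ) z)) := by
    intro z
    simp only [slope_def_field, sharp, map_div₀, map_sub]
    simp
  have := (Complex.continuous_conj.tendsto c).comp (h.comp (tendsto_conj_punctured w))
  refine this.congr fun z => (key z).symm

lemma sharp_hasDerivAt' {f : ℂ → ℂ} (hf : Differentiable ℂ f) (z : ℂ) :
    HasDerivAt (sharp f) ((starRingEnd ℂ) (deriv f ((starRingEnd ℂ) z))) z :=
  sharp_hasDerivAt (hf ((starRingEnd ℂ) z)).hasDerivAt

lemma sharp_differentiable {f : ℂ → ℂ} (hf : Differentiable ℂ f) :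
    Differentiable ℂ (sharp f) := fun z => (sharp_hasDerivAt' hf z).differentiableAt

lemma deriv_sharp {f : ℂ → ℂ} (hf : Differentiable ℂ f) (z : ℂ) :
    deriv (sharp f) z = sharp (deriv f) z := (sharp_hasDerivAt' hf z).deriv

lemma entire_analytic {f : ℂ → ℂ} (hf : Differentiable ℂ f) :
    AnalyticOnNhd ℂ f Set.univ :=
  hf.differentiableOn.analyticOnNhd isOpen_univ

lemma deriv_differentiable {f : ℂ → ℂ} (hf : Differentiable ℂ f) :
    Differentiable ℂ (deriv f) := by
  have := ((entire_analytic hf).deriv).differentiableOn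
  rwa [differentiableOn_univ] at this

lemma entire_eq_of_real {f g : ℂ → ℂ} (hf : Differentiable ℂ f) (hg : Differentiable ℂ g)
    (h : ∀ x : ℝ, f x = g x) : ∀ z, f z = g z := by
  set u : ℕ → ℝ := fun n => ((n : ℝ) + 1)⁻¹ with hu
  have hupos : ∀ n, 0 < u n := fun n => by positivity
  have hseq : Tendsto (fun n : ℕ => ((u n : ℝ) : ℂ)) atTop (𝓝[≠] (0 : ℂ)) := by
    refine tendsto_nhdsWithin_of_tendsto_nhds_of_eventually_within _ ?_ ?_
    · have h1 : Tendsto u atTop (𝓝 0) := by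
        simpa [hu, one_div] using (tendsto_one_div_add_atTop_nhds_zero_nat : Tendsto (fun n : ℕ => 1 / ((n : ℝ) + 1)) atTop (𝓝 0))
      have := (Complex.continuous_ofReal.tendsto 0).comp h1
      simpa [Function.comp_def] using this
    · filter_upwards with n
      simp only [Set.mem_compl_iff, Set.mem_singleton_iff, Complex.ofReal_ne_zero]
      exact (hupos n).ne'
  have freq : ∃ᶠ z in 𝓝[≠] (0 : ℂ), f z = g z :=
    hseq.frequently (Frequently.of_forall fun n => h (u n))
  intro z
  exact (entire_analytic hf).eqOn_of_preconnected_of_frequently_eq (entire_analytic hg)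
    isPreconnected_univ (Set.mem_univ 0) freq (Set.mem_univ z)

lemma entire_zero_of_eventually {h : ℂ → ℂ} (hh : Differentiable ℂ h) {z₀ : ℂ}
    (hz : ∀ᶠ z in 𝓝 z₀, h z = 0) : ∀ z, h z = 0 := fun z =>
  (entire_analytic hh).eqOn_zero_of_preconnected_of_eventuallyEq_zero
    isPreconnected_univ (Set.mem_univ z₀) hz (Set.mem_univ z)

lemma proportional {f g : ℂ → ℂ} (hf : Differentiable ℂ f) (hg : Differentiable ℂ g)
    (hw : ∀ z, deriv f z * g z - f z * deriv g z = 0) {z₀ : ℂ} (hz₀ : g z₀ ≠ 0) :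
    ∀ z, f z = (f z₀ / g z₀) * g z := by
  set lam := f z₀ / g z₀ with hlam
  set h : ℂ → ℂ := fun z => f z - lam * g z with hh
  have hhd : Differentiable ℂ h := hf.sub (hg.const_mul lam)
  -- a ball around z₀ on which g ≠ 0
  have hne : ∀ᶠ z in 𝓝 z₀, g z ≠ 0 := hg.continuous.continuousAt.eventually_ne hz₀
  obtain ⟨r, hr, hball⟩ : ∃ r > 0, ∀ z ∈ Metric.ball z₀ r, g z ≠ 0 := by
    rcases Metric.eventually_nhds_iff_ball.mp hne with ⟨r, hr, hb⟩
    exact ⟨r, hr, hb⟩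
  set q : ℂ → ℂ := fun z => h z / g z with hq
  have hqd : DifferentiableOn ℂ q (Metric.ball z₀ r) := fun z hz =>
    ((hhd z).div (hg z) (hball z hz)).differentiableWithinAt
  have hq0 : ∀ z ∈ Metric.ball z₀ r, HasDerivAt q 0 z := by
    intro z hz
    have hd : HasDerivAt q ((deriv h z * g z - h z * deriv g z) / (g z) ^ 2) z :=
      (hhd z).hasDerivAt.div (hg z).hasDerivAt (hball z hz)
    have hnum : deriv h z * g z - h z * deriv g z = 0 := by
      have hdh : deriv h z = deriv f z - lam * deriv g z := by
        rw [hh]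
        rw [deriv_fun_sub (hf z) ((hg z).const_mul lam), deriv_const_mul lam (hg z)]
      rw [hdh, hh]
      have := hw z
      ring_nf
      ring_nf at this
      linear_combination this
    rw [hnum] at hd
    simpa using hd
  have hconst : ∀ z ∈ Metric.ball z₀ r, q z = q z₀ := by
    intro z hz
    refine (convex_ball z₀ r).is_const_of_fderivWithin_eq_zero hqd ?_ hz
      (Metric.mem_ball_self hr)
    intro x hx
    have : fderivWithin ℂ q (Metric.ball z₀ r) x = fderiv ℂ q x :=
      fderivWithin_of_isOpen Metric.isOpen_ball hx
    rw [this, ((hq0 x hx).hasFDerivAt).fderiv]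
    ext v
    simp
  have hq0' : q z₀ = 0 := by
    rw [hq, hh, hlam]
    field_simp
    ring
  have hzero : ∀ z, h z = 0 := by
    apply entire_zero_of_eventually hhd (z₀ := z₀)
    rw [Metric.eventually_nhds_iff_ball]
    refine ⟨r, hr, fun z hz => ?_⟩
    have := hconst z hz
    rw [hq0'] at this
    have := (div_eq_zero_iff.mp this).resolve_right (hball z hz)
    exact this
  intro z
  have h0 := hzero z
  rw [hh] at h0
  simp only at h0
  linear_combination h0

-- real-line modulus identity
lemma real_mul_sharp (f : ℂ → ℂ) (x : ℝ) :
    f x * sharp f x = ((‖f (x : ℂ)‖ ^ 2 : ℝ) : ℂ) := by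
  simp only [sharp, Complex.conj_ofReal]
  rw [Complex.mul_conj]
  norm_cast
  simp [Complex.normSq_eq_norm_sq]

theorem mcdonald_derivative (γ : ℝ) (hγ : 0 < γ) (f g : ℂ → ℂ)
    (hf : IsPW γ f) (hg : IsPW γ g)
    (h1 : ∀ x : ℝ, ‖f x‖ = ‖g x‖)
    (h2 : ∀ x : ℝ, ‖deriv f x‖ = ‖deriv g x‖) :
    ∃ lam : ℂ, ‖lam‖ = 1 ∧
      ((∀ z : ℂ, f z = lam * g z) ∨ (∀ z : ℂ, f z = lam * sharp g z)) := by
  obtain ⟨hfd, -, -⟩ := hf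
  obtain ⟨hgd, -, -⟩ := hg
  have hfd' : Differentiable ℂ (deriv f) := deriv_differentiable hfd
  have hgd' : Differentiable ℂ (deriv g) := deriv_differentiable hgd
  have hfs : Differentiable ℂ (sharp f) := sharp_differentiable hfd
  have hgs : Differentiable ℂ (sharp g) := sharp_differentiable hgd
  have hfs' : Differentiable ℂ (sharp (deriv f)) := sharp_differentiable hfd'
  have hgs' : Differentiable ℂ (sharp (deriv g)) := sharp_differentiable hgd'
  -- key entire-function identities
  have E1 : ∀ z, f z * sharp f z = g z * sharp g z := by
    apply entire_eq_of_real (hfd.mul hfs) (hgd.mul hgs)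
    intro x
    rw [Pi.mul_apply, Pi.mul_apply, real_mul_sharp, real_mul_sharp, h1 x]
  have E2 : ∀ z, deriv f z * sharp (deriv f) z = deriv g z * sharp (deriv g) z := by
    apply entire_eq_of_real (hfd'.mul hfs') (hgd'.mul hgs')
    intro x
    rw [Pi.mul_apply, Pi.mul_apply, real_mul_sharp, real_mul_sharp, h2 x]
  have E3 : ∀ z, deriv f z * sharp f z + f z * sharp (deriv f) z
      = deriv g z * sharp g z + g z * sharp (deriv g) z := by
    intro z
    have hP : HasDerivAt (fun z => f z * sharp f z)
        (deriv f z * sharp f z + f z * sharp (deriv f) z) z := by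
      have := (hfd z).hasDerivAt.mul (sharp_hasDerivAt' hfd z)
      simpa [sharp, Pi.mul_def] using this
    have hQ : HasDerivAt (fun z => g z * sharp g z)
        (deriv g z * sharp g z + g z * sharp (deriv g) z) z := by
      have := (hgd z).hasDerivAt.mul (sharp_hasDerivAt' hgd z)
      simpa [sharp, Pi.mul_def] using this
    have hfun : (fun z => f z * sharp f z) = (fun z => g z * sharp g z) := funext E1
    have := hP.deriv
    rw [hfun] at this
    rw [← this, hQ.deriv]
  -- the product AB vanishes identically
  set A : ℂ → ℂ := fun z => deriv f z * g z - f z * deriv g z with hA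
  set B : ℂ → ℂ := fun z => deriv f z * sharp g z - f z * sharp (deriv g) z with hB
  have hAB : ∀ z, A z * B z = 0 := by
    intro z
    simp only [hA, hB]
    linear_combination (-(deriv f z)^2) * E1 z - (f z)^2 * E2 z + f z * deriv f z * E3 z
  -- auxiliary: if g vanishes on ℝ then also f ≡ 0
  have hfzero_of : (∀ x : ℝ, g x = 0) → ∀ z, f z = 0 := by
    intro hgx
    apply entire_eq_of_real hfd (differentiable_const 0)
    intro x
    have := h1 x
    rw [hgx x] at this
    simpa using norm_eq_zero.mp (by simpa using this)
  by_cases hAz : ∀ z, A z = 0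
  · -- f' g = f g'
    by_cases hgx : ∀ x : ℝ, g x = 0
    · have hg0 : ∀ z, g z = 0 := entire_eq_of_real hgd (differentiable_const 0) hgx
      refine ⟨1, by simp, Or.inl fun z => ?_⟩
      rw [hfzero_of hgx z, hg0 z, mul_zero]
    · push_neg at hgx
      obtain ⟨x, hx⟩ := hgx
      have hprop := proportional hfd hgd (fun z => hAz z) (z₀ := (x : ℂ)) hx
      refine ⟨f x / g x, ?_, Or.inl hprop⟩
      have hn := h1 x
      rw [hprop x] at hn
      rw [norm_mul] at hn
      have hgn : ‖g (x : ℂ)‖ ≠ 0 := norm_ne_zero_iff.mpr hx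
      have hmm : ‖f (x : ℂ) / g (x : ℂ)‖ * ‖g (x : ℂ)‖ = 1 * ‖g (x : ℂ)‖ := by
        rw [one_mul]; exact hn
      exact mul_right_cancel₀ hgn hmm
  · push_neg at hAz
    obtain ⟨z₁, hz₁⟩ := hAz
    have hBd : Differentiable ℂ B := (hfd'.mul hgs).sub (hfd.mul hgs')
    have hAd : Differentiable ℂ A := (hfd'.mul hgd).sub (hfd.mul hgd')
    have hB0 : ∀ z, B z = 0 := by
      apply entire_zero_of_eventually hBd (z₀ := z₁)
      filter_upwards [hAd.continuous.continuousAt.eventually_ne hz₁] with z hz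
      have := hAB z
      exact (mul_eq_zero.mp this).resolve_left hz
    have hw : ∀ z, deriv f z * sharp g z - f z * deriv (sharp g) z = 0 := by
      intro z
      rw [deriv_sharp hgd z]
      exact hB0 z
    by_cases hgx : ∀ x : ℝ, g x = 0
    · have hg0 : ∀ z, g z = 0 := entire_eq_of_real hgd (differentiable_const 0) hgx
      refine ⟨1, by simp, Or.inr fun z => ?_⟩
      rw [hfzero_of hgx z]
      simp [sharp, hg0]
    · push_neg at hgx
      obtain ⟨x, hx⟩ := hgx
      have hsx : sharp g x ≠ 0 := by
        simp only [sharp, Complex.conj_ofReal]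
        simpa using hx
      have hprop := proportional hfd hgs hw (z₀ := (x : ℂ)) hsx
      refine ⟨f x / sharp g x, ?_, Or.inr hprop⟩
      have hn := h1 x
      rw [hprop x] at hn
      rw [norm_mul] at hn
      have hsgn : ‖sharp g (x : ℂ)‖ = ‖g (x : ℂ)‖ := by
        simp [sharp, Complex.conj_ofReal]
      rw [hsgn] at hn
      have hgn : ‖g (x : ℂ)‖ ≠ 0 := norm_ne_zero_iff.mpr hx
      have hmm : ‖f (x : ℂ) / sharp g (x : ℂ)‖ * ‖g (x : ℂ)‖ = 1 * ‖g (x : ℂ)‖ := by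
        rw [one_mul]; exact hn
      exact mul_right_cancel₀ hgn hmm
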